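/- Fix a, c ∈ (0, π). Let I ⊆ (0, π) be an open interval and α, γ : I → (0, π) functions such that for every b ∈ I: cos a = cos b · cos c + sin b · sin c · cos(α(b)), and cos c = cos a · cos b + sin a · sin b · cos(γ(b)). Then α is differentiable on I with α′(b) = − cos(γ(b)) / (sin(γ(b)) · sin b) for every b ∈ I. -/

import Mathlib

/-!
Solving the first cosine law for `cos α` writes `α` locally as `arccos` of an explicit smooth
function of `b`. Differentiating gives `α' = -(cos c - cos a cos b) / (sin α sin² b sin c)`; the
second cosine law turns the numerator into `sin a sin b cos γ`, and the spherical law of sines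
`sin α sin c = sin γ sin a` removes `sin a / sin α`.
-/

open Real Set Filter Topology

/-- The right side is symmetric in `x, y, z`: this is how the law of sines comes out of the law
of cosines. -/
lemma sq_sin_mul_sin_mul_sin_of_cos_eq {x y z θ : ℝ}
    (h : cos x = cos y * cos z + sin y * sin z * cos θ) :
    (sin y * sin z * sin θ) ^ 2
      = 1 - cos x ^ 2 - cos y ^ 2 - cos z ^ 2 + 2 * cos x * cos y * cos z := by
  linear_combination (sin y * sin z) ^ 2 * sin_sq_add_cos_sq θ
    + (cos x - cos y * cos z + sin y * sin z * cos θ) * h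
    + sin z ^ 2 * sin_sq_add_cos_sq y + (1 - cos y ^ 2) * sin_sq_add_cos_sq z

lemma spherical_law_of_sines {a b c α γ : ℝ} (ha : 0 ≤ sin a) (hb : 0 < sin b) (hc : 0 ≤ sin c)
    (hα : 0 ≤ sin α) (hγ : 0 ≤ sin γ)
    (law1 : cos a = cos b * cos c + sin b * sin c * cos α)
    (law2 : cos c = cos a * cos b + sin a * sin b * cos γ) :
    sin α * sin c = sin γ * sin a := by
  have hsq : (sin b * sin c * sin α) ^ 2 = (sin a * sin b * sin γ) ^ 2 := by
    rw [sq_sin_mul_sin_mul_sin_of_cos_eq law1, sq_sin_mul_sin_mul_sin_of_cos_eq law2]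
    ring
  have h := (sq_eq_sq₀ (by positivity) (by positivity)).mp hsq
  exact mul_left_cancel₀ hb.ne' (by linear_combination h)

lemma hasDerivAt_cos_sub_cos_mul_cos_div (a c : ℝ) {b : ℝ} (hb : sin b ≠ 0) (hc : sin c ≠ 0) :
    HasDerivAt (fun x => (cos a - cos x * cos c) / (sin x * sin c))
      ((cos c - cos a * cos b) / (sin b ^ 2 * sin c)) b := by
  have h := (((hasDerivAt_cos b).mul_const (cos c)).const_sub (cos a)).div
    ((hasDerivAt_sin b).mul_const (sin c)) (mul_ne_zero hb hc)
  refine h.congr_deriv ?_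
  field_simp
  linear_combination cos c * sin_sq_add_cos_sq b

lemma hasDerivAt_of_eventually_cos_eq {f θ : ℝ → ℝ} {f' b : ℝ} (hf : HasDerivAt f f' b)
    (hθ : ∀ᶠ x in 𝓝 b, θ x ∈ Icc 0 π ∧ cos (θ x) = f x) (hb : θ b ∈ Ioo 0 π) :
    HasDerivAt θ (-f' / sin (θ b)) b := by
  have hfb : f b = cos (θ b) := hθ.self_of_nhds.2.symm
  have hsin : 0 < sin (θ b) := sin_pos_of_pos_of_lt_pi hb.1 hb.2
  have hcos : cos (θ b) ^ 2 < 1 := by nlinarith [sin_sq_add_cos_sq (θ b)]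
  have h := (hasDerivAt_arccos (x := f b) (by rw [hfb]; nlinarith) (by rw [hfb]; nlinarith)).comp
    b hf
  have hsqrt : √(1 - f b ^ 2) = sin (θ b) := by
    rw [hfb, sin_eq_sqrt_one_sub_cos_sq hb.1.le hb.2.le]
  rw [hsqrt] at h
  refine (h.congr_of_eventuallyEq ?_).congr_deriv (by ring)
  filter_upwards [hθ] with x hx
  rw [Function.comp_apply, ← hx.2, arccos_cos hx.1.1 hx.1.2]

/-- Spherical trigonometry: with the sides `a, c` fixed and the angles `α`, `γ`
determined by the cosine laws as functions of the side `b`, one has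
`∂α/∂b = - cos γ / (sin γ · sin b)`. -/
theorem stmt_10 (a c : ℝ) (ha : a ∈ Ioo 0 π) (hc : c ∈ Ioo 0 π)
    (lo hi : ℝ) (hI : Ioo lo hi ⊆ Ioo 0 π)
    (α γ : ℝ → ℝ)
    (hα : ∀ b ∈ Ioo lo hi, α b ∈ Ioo 0 π)
    (hγ : ∀ b ∈ Ioo lo hi, γ b ∈ Ioo 0 π)
    (law1 : ∀ b ∈ Ioo lo hi, cos a = cos b * cos c + sin b * sin c * cos (α b))
    (law2 : ∀ b ∈ Ioo lo hi, cos c = cos a * cos b + sin a * sin b * cos (γ b)) :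
    ∀ b ∈ Ioo lo hi, HasDerivAt α (-(cos (γ b)) / (sin (γ b) * sin b)) b := by
  have pos_sin : ∀ {x}, x ∈ Ioo 0 π → 0 < sin x := fun hx => sin_pos_of_pos_of_lt_pi hx.1 hx.2
  intro b hb
  have hsb := pos_sin (hI hb)
  have hsc := pos_sin hc
  have hsα := pos_sin (hα b hb)
  have hsγ := pos_sin (hγ b hb)
  have hcos : ∀ᶠ x in 𝓝 b, α x ∈ Icc 0 π ∧
      cos (α x) = (cos a - cos x * cos c) / (sin x * sin c) := by
    filter_upwards [isOpen_Ioo.mem_nhds hb] with x hx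
    refine ⟨Ioo_subset_Icc_self (hα x hx), ?_⟩
    rw [eq_div_iff (mul_pos (pos_sin (hI hx)) hsc).ne', law1 x hx]
    ring
  have hsines := spherical_law_of_sines (pos_sin ha).le hsb hsc.le hsα.le hsγ.le
    (law1 b hb) (law2 b hb)
  refine (hasDerivAt_of_eventually_cos_eq (hasDerivAt_cos_sub_cos_mul_cos_div a c hsb.ne' hsc.ne')
    hcos (hα b hb)).congr_deriv ?_
  rw [law2 b hb]
  field_simp
  linear_combination sin b * cos (γ b) * hsines
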